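/- arXiv:1812.03949 — 4 statements merged into one kernel-verified Lean document; each statement's English description precedes it below -/
import Mathlib

section
/- Let p > 1 and set p̄ = min(2,p), f(u) = |u|^{p-1} u, F(u) = |u|^{p+1}/(p+1). There is a constant C > 0 depending only on p such that for all u > 0 and all v ∈ ℝ, |F(u+v) - F(u) - F'(u)v - ½F''(u)v²| ≤ C(|v|^{p+1} + u^{p-p̄}|v|^{p̄+1}). -/
/-!
Both sides are homogeneous of degree `p + 1` under `(u, v) ↦ (λ u, λ v)`, so it suffices to take
`u = 1`. For `|s| ≤ 1/2` the map `t ↦ (1 + t) ^ (p + 1)` has third derivative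
`p (p - 1) (1 + t) ^ (p - 2)` bounded on `[1/2, 3/2]`, and three mean value steps bound the
remainder by `|s| ^ 3 ≤ |s| ^ (p̄ + 1)`. For `|s| ≥ 1/2` each of the four terms is separately
`O(|s| ^ (p + 1))`.
-/

open Real Set

noncomputable def secondOrderRemainder (p u v : ℝ) : ℝ :=
  |u + v| ^ (p + 1) / (p + 1) - |u| ^ (p + 1) / (p + 1) - (|u| ^ (p - 1) * u) * v
    - (1 / 2) * (p * |u| ^ (p - 1)) * v ^ 2

theorem abs_sub_le_of_forall_hasDerivAt_uIcc {g g' : ℝ → ℝ} {a b B : ℝ}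
    (hg : ∀ t ∈ uIcc a b, HasDerivAt g (g' t) t) (hB : ∀ t ∈ uIcc a b, |g' t| ≤ B)
    {t : ℝ} (ht : t ∈ uIcc a b) : |g t - g a| ≤ B * |b - a| := by
  have hB₀ : 0 ≤ B := (abs_nonneg _).trans (hB a left_mem_uIcc)
  calc |g t - g a| ≤ B * ‖t - a‖ :=
        (convex_uIcc a b).norm_image_sub_le_of_norm_hasDerivWithin_le
          (fun x hx => (hg x hx).hasDerivWithinAt) hB left_mem_uIcc ht
    _ ≤ B * |b - a| := mul_le_mul_of_nonneg_left (abs_sub_left_of_mem_uIcc ht) hB₀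

theorem rpow_le_max_of_mem_Icc {a b c r : ℝ} (ha : 0 < a) (hc : c ∈ Icc a b) :
    c ^ r ≤ max (a ^ r) (b ^ r) := by
  rcases le_total 0 r with hr | hr
  · exact le_max_of_le_right (rpow_le_rpow (ha.le.trans hc.1) hc.2 hr)
  · exact le_max_of_le_left (rpow_le_rpow_of_nonpos ha hc.1 hr)

theorem rpow_le_rpow_sub_mul_rpow {a x k m : ℝ} (ha : 0 < a) (hx : 1 ≤ a * x) (hkm : k ≤ m) :
    x ^ k ≤ a ^ (m - k) * x ^ m := by
  have hx₀ : 0 ≤ x := nonneg_of_mul_nonneg_right (zero_le_one.trans hx) ha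
  have h := rpow_le_rpow_of_exponent_le hx hkm
  rw [mul_rpow ha.le hx₀, mul_rpow ha.le hx₀] at h
  rw [rpow_sub ha, div_mul_eq_mul_div, le_div_iff₀ (rpow_pos_of_pos ha k), mul_comm]
  exact h

theorem rpow_mul_abs_div_rpow {u : ℝ} (hu : 0 < u) (p q v : ℝ) :
    u ^ (p + 1) * |v / u| ^ (q + 1) = u ^ (p - q) * |v| ^ (q + 1) := by
  rw [abs_div, abs_of_pos hu, div_rpow (abs_nonneg v) hu.le,
    show p - q = (p + 1) - (q + 1) by ring, rpow_sub hu]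
  ring

theorem secondOrderRemainder_eq_rpow_mul {u : ℝ} (hu : 0 < u) (p v : ℝ) :
    secondOrderRemainder p u v = u ^ (p + 1) * secondOrderRemainder p 1 (v / u) := by
  obtain ⟨s, rfl⟩ : ∃ s, v = u * s := ⟨v / u, by field_simp⟩
  have h_abs : |u + u * s| = u * |1 + s| := by
    rw [show u + u * s = u * (1 + s) by ring, abs_mul, abs_of_pos hu]
  have h_pow : u ^ (p + 1) = u ^ (p - 1) * u ^ 2 := by
    rw [← rpow_natCast, ← rpow_add hu]; norm_num; ring_nf
  rw [mul_div_cancel_left₀ _ hu.ne']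
  simp only [secondOrderRemainder, h_abs, abs_of_pos hu, abs_one, one_rpow,
    mul_rpow hu.le (abs_nonneg _), h_pow]
  ring

theorem secondOrderRemainder_one (p s : ℝ) :
    secondOrderRemainder p 1 s = |1 + s| ^ (p + 1) / (p + 1) - 1 / (p + 1) - s - p / 2 * s ^ 2 := by
  simp only [secondOrderRemainder, abs_one, one_rpow]
  ring

theorem abs_secondOrderRemainder_one_le_of_abs_le_half {p s : ℝ} (hp : p + 1 ≠ 0)
    (hs : |s| ≤ 1 / 2) :
    |secondOrderRemainder p 1 s| ≤
      |p| * |p - 1| * max ((1 / 2) ^ (p - 2)) ((3 / 2) ^ (p - 2)) * |s| ^ 3 := by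
  set K := max ((1 / 2 : ℝ) ^ (p - 2)) ((3 / 2) ^ (p - 2))
  have h_mem : ∀ t ∈ uIcc 0 s, 1 + t ∈ Icc (1 / 2 : ℝ) (3 / 2) := by
    intro t ht
    have := abs_le.mp ((abs_sub_left_of_mem_uIcc ht).trans (by simpa using hs))
    constructor <;> linarith [this.1, this.2]
  have h_pos : ∀ t ∈ uIcc 0 s, 0 < 1 + t := fun t ht => by linarith [(h_mem t ht).1]
  have h_deriv : ∀ q, ∀ t ∈ uIcc 0 s,
      HasDerivAt (fun t => (1 + t) ^ q) (q * (1 + t) ^ (q - 1)) t := fun q t ht => by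
    simpa using ((hasDerivAt_id t).const_add 1).rpow_const (p := q) (Or.inl (h_pos t ht).ne')
  have h₁ : ∀ t ∈ uIcc 0 s, |(1 + t) ^ (p - 1) - 1| ≤ |p - 1| * K * |s| := by
    have hb : ∀ t ∈ uIcc 0 s, |(p - 1) * (1 + t) ^ (p - 1 - 1)| ≤ |p - 1| * K := by
      intro t ht
      rw [abs_mul, abs_of_pos (rpow_pos_of_pos (h_pos t ht) _), show p - 1 - 1 = p - 2 by ring]
      exact mul_le_mul_of_nonneg_left (rpow_le_max_of_mem_Icc (by norm_num) (h_mem t ht))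
        (abs_nonneg _)
    intro t ht
    simpa using abs_sub_le_of_forall_hasDerivAt_uIcc (h_deriv (p - 1)) hb ht
  have h₂ : ∀ t ∈ uIcc 0 s,
      |(1 + t) ^ p - 1 - p * t| ≤ |p| * (|p - 1| * K * |s|) * |s| := by
    have hb : ∀ t ∈ uIcc 0 s,
        |p * (1 + t) ^ (p - 1) - p * 1| ≤ |p| * (|p - 1| * K * |s|) := by
      intro t ht
      rw [← mul_sub, abs_mul]
      exact mul_le_mul_of_nonneg_left (h₁ t ht) (abs_nonneg _)
    intro t ht
    simpa using abs_sub_le_of_forall_hasDerivAt_uIcc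
      (g := fun t => (1 + t) ^ p - 1 - p * t)
      (fun t ht => ((h_deriv p t ht).sub_const 1).sub ((hasDerivAt_id t).const_mul p)) hb ht
  have h₃ := abs_sub_le_of_forall_hasDerivAt_uIcc
    (g := fun t => (1 + t) ^ (p + 1) / (p + 1) - t - p / 2 * t ^ 2)
    (fun t ht => ((((h_deriv (p + 1) t ht).div_const (p + 1)).sub (hasDerivAt_id' t)).sub
        ((hasDerivAt_pow 2 t).const_mul (p / 2))).congr_deriv (by
      rw [mul_div_cancel_left₀ _ hp, add_sub_cancel_right]
      ring)) h₂ right_mem_uIcc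
  rw [secondOrderRemainder_one, abs_of_pos (h_pos s right_mem_uIcc)]
  convert h₃ using 1 <;> norm_num <;> ring_nf

theorem abs_secondOrderRemainder_one_le_of_half_le_abs {p s : ℝ} (hp : 1 ≤ p)
    (hs : 1 / 2 ≤ |s|) :
    |secondOrderRemainder p 1 s| ≤
      (3 ^ (p + 1) + 2 ^ (p + 1) + 2 ^ p + p / 2 * 2 ^ (p - 1)) * |s| ^ (p + 1) := by
  have h2s : 1 ≤ 2 * |s| := by linarith
  have hp1 : 1 ≤ p + 1 := by linarith
  have h_first : |1 + s| ^ (p + 1) / (p + 1) ≤ 3 ^ (p + 1) * |s| ^ (p + 1) :=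
    calc |1 + s| ^ (p + 1) / (p + 1) ≤ |1 + s| ^ (p + 1) := div_le_self (by positivity) hp1
      _ ≤ (3 * |s|) ^ (p + 1) :=
        rpow_le_rpow (abs_nonneg _) (by linarith [abs_add_le (1 : ℝ) s, abs_one (α := ℝ)])
          (by linarith)
      _ = 3 ^ (p + 1) * |s| ^ (p + 1) := mul_rpow (by norm_num) (abs_nonneg _)
  have h_const : 1 / (p + 1) ≤ 2 ^ (p + 1) * |s| ^ (p + 1) :=
    calc 1 / (p + 1) ≤ |s| ^ (0 : ℝ) := by
          rw [rpow_zero]; exact div_le_one_of_le₀ hp1 (by linarith)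
      _ ≤ 2 ^ (p + 1 - 0) * |s| ^ (p + 1) :=
          rpow_le_rpow_sub_mul_rpow two_pos h2s (by linarith : (0 : ℝ) ≤ p + 1)
      _ = 2 ^ (p + 1) * |s| ^ (p + 1) := by rw [sub_zero]
  have h_lin : |s| ≤ 2 ^ p * |s| ^ (p + 1) := by
    simpa using rpow_le_rpow_sub_mul_rpow (k := 1) (m := p + 1) (a := 2) two_pos h2s (by linarith)
  have h_sq : p / 2 * s ^ 2 ≤ p / 2 * (2 ^ (p - 1) * |s| ^ (p + 1)) := by
    have := rpow_le_rpow_sub_mul_rpow (k := 2) (m := p + 1) (a := 2) two_pos h2s (by linarith)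
    rw [rpow_two, sq_abs, show p + 1 - 2 = p - 1 by ring] at this
    exact mul_le_mul_of_nonneg_left this (by linarith)
  have h_first₀ : 0 ≤ |1 + s| ^ (p + 1) / (p + 1) := by positivity
  have h_const₀ : 0 ≤ 1 / (p + 1) := by positivity
  have h_sq₀ : 0 ≤ p / 2 * s ^ 2 := by positivity
  rw [secondOrderRemainder_one, abs_le]
  constructor <;> linarith [neg_abs_le s, le_abs_self s]

theorem exists_abs_secondOrderRemainder_one_le {p : ℝ} (hp : 1 < p) :
    ∃ C > 0, ∀ s : ℝ,
      |secondOrderRemainder p 1 s| ≤ C * (|s| ^ (p + 1) + |s| ^ (min 2 p + 1)) := by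
  set A := |p| * |p - 1| * max ((1 / 2 : ℝ) ^ (p - 2)) ((3 / 2) ^ (p - 2))
  set B := (3 : ℝ) ^ (p + 1) + 2 ^ (p + 1) + 2 ^ p + p / 2 * 2 ^ (p - 1)
  have hA : 0 ≤ A := by positivity
  have hB : 0 < B := by positivity
  refine ⟨A + B, by positivity, fun s => ?_⟩
  have h_big : 0 ≤ |s| ^ (p + 1) := by positivity
  have h_small : 0 ≤ |s| ^ (min 2 p + 1) := by positivity
  rcases le_or_gt |s| (1 / 2) with hs | hs
  · have h_cube : |s| ^ 3 ≤ |s| ^ (min 2 p + 1) := by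
      rw [← rpow_natCast]
      exact rpow_le_rpow_of_exponent_ge' (abs_nonneg _) (by linarith) (by positivity)
        (by push_cast; linarith [min_le_left 2 p])
    calc |secondOrderRemainder p 1 s| ≤ A * |s| ^ 3 :=
          abs_secondOrderRemainder_one_le_of_abs_le_half (by linarith) hs
      _ ≤ A * |s| ^ (min 2 p + 1) := by gcongr
      _ ≤ (A + B) * (|s| ^ (p + 1) + |s| ^ (min 2 p + 1)) := by nlinarith
  · calc |secondOrderRemainder p 1 s| ≤ B * |s| ^ (p + 1) :=
          abs_secondOrderRemainder_one_le_of_half_le_abs hp.le hs.le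
      _ ≤ (A + B) * (|s| ^ (p + 1) + |s| ^ (min 2 p + 1)) := by nlinarith

theorem taylor_estimate_F (p : ℝ) (hp : 1 < p) :
    ∃ C > 0, ∀ u : ℝ, 0 < u → ∀ v : ℝ,
      |(|u + v| ^ (p + 1) / (p + 1)) - (|u| ^ (p + 1) / (p + 1))
          - (|u| ^ (p - 1) * u) * v - (1 / 2) * (p * |u| ^ (p - 1)) * v ^ 2|
        ≤ C * (|v| ^ (p + 1) + u ^ (p - min 2 p) * |v| ^ (min 2 p + 1)) := by
  obtain ⟨C, hC, h_one⟩ := exists_abs_secondOrderRemainder_one_le hp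
  refine ⟨C, hC, fun u hu v => ?_⟩
  calc |secondOrderRemainder p u v| = u ^ (p + 1) * |secondOrderRemainder p 1 (v / u)| := by
        rw [secondOrderRemainder_eq_rpow_mul hu, abs_mul, abs_of_pos (rpow_pos_of_pos hu _)]
    _ ≤ u ^ (p + 1) * (C * (|v / u| ^ (p + 1) + |v / u| ^ (min 2 p + 1))) := by
        gcongr
        exact h_one _
    _ = C * (|v| ^ (p + 1) + u ^ (p - min 2 p) * |v| ^ (min 2 p + 1)) := by
        rw [mul_left_comm, mul_add, rpow_mul_abs_div_rpow hu, rpow_mul_abs_div_rpow hu, sub_self,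
          rpow_zero, one_mul]
end

section
/- Let p > 1 and p̄ = min(2,p), f(u) = |u|^{p-1}u. There is a constant C > 0 depending only on p such that for all u > 0 and v ∈ ℝ, |(f(u+v) - f(u) - f'(u)v)v| ≤ C(|v|^{p+1} + u^{p-p̄}|v|^{p̄+1}). -/
/-!
Split according to the size of `v` relative to `u`. When `2|v| ≤ u`, the segment from `u` to
`u + v` stays in `[u/2, 2u]`, where `x ↦ x ^ (p - 2)` is comparable to `u ^ (p - 2)`; applying the
mean value inequality twice (to `x ^ p - p u ^ (p - 1) x`, then to `x ^ (p - 1)`) bounds the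
remainder by `u ^ (p - 2) v²`, and for `p < 2` one trades `u ^ (p - 2) ≤ |v| ^ (p - 2)`. When
`u < 2|v|`, every term of the remainder is at most `(3|v|) ^ p` up to a factor `p`.
-/

open Real Set

lemma rpow_le_two_rpow_abs_mul_rpow {u x : ℝ} (q : ℝ) (hu : 0 < u)
    (hx : x ∈ Icc (u / 2) (2 * u)) : x ^ q ≤ 2 ^ |q| * u ^ q := by
  obtain ⟨hlo, hhi⟩ := hx
  rcases le_total 0 q with hq | hq
  · calc x ^ q ≤ (2 * u) ^ q := rpow_le_rpow (by linarith) hhi hq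
      _ = 2 ^ |q| * u ^ q := by rw [abs_of_nonneg hq, mul_rpow zero_le_two hu.le]
  · calc x ^ q ≤ (u / 2) ^ q := rpow_le_rpow_of_nonpos (by positivity) hlo hq
      _ = 2 ^ |q| * u ^ q := by
        rw [abs_of_nonpos hq, div_rpow hu.le zero_le_two, rpow_neg zero_le_two]; ring

lemma abs_rpow_sub_rpow_le {u x y : ℝ} (q : ℝ) (hu : 0 < u) (hx : x ∈ Icc (u / 2) (2 * u))
    (hy : y ∈ Icc (u / 2) (2 * u)) :
    |x ^ q - y ^ q| ≤ |q| * 2 ^ |q - 1| * u ^ (q - 1) * |x - y| := by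
  have hpos : ∀ z ∈ Icc (u / 2) (2 * u), 0 < z := fun z hz => by linarith [hz.1]
  refine (convex_Icc _ _).norm_image_sub_le_of_norm_hasDerivWithin_le (f := fun z => z ^ q)
    (fun z hz => (hasDerivAt_rpow_const (Or.inl (hpos z hz).ne')).hasDerivWithinAt)
    (fun z hz => ?_) hy hx
  rw [Real.norm_eq_abs, abs_mul, abs_of_pos (rpow_pos_of_pos (hpos z hz) _), mul_assoc]
  exact mul_le_mul_of_nonneg_left (rpow_le_two_rpow_abs_mul_rpow _ hu hz) (abs_nonneg q)

lemma abs_rpow_taylor_remainder_le_of_two_mul_abs_le {u v : ℝ} (p : ℝ) (hu : 0 < u)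
    (hv : 2 * |v| ≤ u) :
    |(u + v) ^ p - u ^ p - p * u ^ (p - 1) * v|
      ≤ |p * (p - 1)| * 2 ^ |p - 2| * u ^ (p - 2) * v ^ 2 := by
  have hsub : Icc (u - |v|) (u + |v|) ⊆ Icc (u / 2) (2 * u) :=
    Icc_subset_Icc (by linarith) (by linarith)
  have hu_mem : u ∈ Icc (u - |v|) (u + |v|) := by
    constructor <;> linarith [abs_nonneg v]
  have huv_mem : u + v ∈ Icc (u - |v|) (u + |v|) := by
    constructor <;> linarith [neg_abs_le v, le_abs_self v]
  have hderiv_le : ∀ x ∈ Icc (u - |v|) (u + |v|),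
      ‖p * x ^ (p - 1) - p * u ^ (p - 1)‖
        ≤ |p * (p - 1)| * 2 ^ |p - 2| * u ^ (p - 2) * |v| := by
    intro x hx
    have hxu : |x - u| ≤ |v| := abs_sub_le_iff.mpr ⟨by linarith [hx.2], by linarith [hx.1]⟩
    have hlip := abs_rpow_sub_rpow_le (p - 1) hu (hsub hx) (hsub hu_mem)
    rw [show p - 1 - 1 = p - 2 by ring] at hlip
    rw [Real.norm_eq_abs, ← mul_sub, abs_mul, abs_mul]
    calc |p| * |x ^ (p - 1) - u ^ (p - 1)|
        ≤ |p| * (|p - 1| * 2 ^ |p - 2| * u ^ (p - 2) * |v|) := by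
          gcongr
          exact hlip.trans (by gcongr)
      _ = |p| * |p - 1| * 2 ^ |p - 2| * u ^ (p - 2) * |v| := by ring
  have key := (convex_Icc _ _).norm_image_sub_le_of_norm_hasDerivWithin_le
    (f := fun x => x ^ p - p * u ^ (p - 1) * x)
    (fun x hx => (((hasDerivAt_rpow_const (Or.inl (by linarith [(hsub hx).1] : x ≠ 0))).sub
      ((hasDerivAt_id x).const_mul _)).hasDerivWithinAt).congr_deriv (by ring))
    hderiv_le hu_mem huv_mem
  simp only [Real.norm_eq_abs, add_sub_cancel_left] at key
  calc _ = |(u + v) ^ p - p * u ^ (p - 1) * (u + v) - (u ^ p - p * u ^ (p - 1) * u)| := by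
        ring_nf
    _ ≤ |p * (p - 1)| * 2 ^ |p - 2| * u ^ (p - 2) * |v| * |v| := key
    _ = |p * (p - 1)| * 2 ^ |p - 2| * u ^ (p - 2) * v ^ 2 := by rw [mul_assoc, ← sq, sq_abs]

lemma abs_signed_rpow_taylor_remainder_le_of_abs_le_two_mul {p u v : ℝ} (hp : 1 ≤ p)
    (h : |u| ≤ 2 * |v|) :
    |(|u + v| ^ (p - 1) * (u + v)) - |u| ^ (p - 1) * u - p * |u| ^ (p - 1) * v|
      ≤ (p + 2) * 3 ^ p * |v| ^ p := by
  set w := 3 * |v| with hw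
  have hsigned : ∀ x, |x| ≤ w → |(|x| ^ (p - 1) * x)| ≤ w ^ p := fun x hx => by
    rw [abs_mul, abs_of_nonneg (by positivity), ← rpow_add_one' (abs_nonneg x) (by linarith),
      sub_add_cancel]
    exact rpow_le_rpow (abs_nonneg x) hx (by linarith)
  have hlin : |p * |u| ^ (p - 1) * v| ≤ p * w ^ p := by
    have hsplit : w ^ p = w ^ (p - 1) * w := by
      rw [← rpow_add_one' (by positivity) (by linarith), sub_add_cancel]
    rw [abs_mul, abs_mul, abs_of_nonneg (show 0 ≤ p by linarith),
      abs_of_nonneg (rpow_nonneg (abs_nonneg u) _), hsplit, mul_assoc]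
    gcongr <;> linarith [abs_nonneg v]
  calc _ ≤ |(|u + v| ^ (p - 1) * (u + v))| + |(|u| ^ (p - 1) * u)| + |p * |u| ^ (p - 1) * v| :=
        (abs_sub _ _).trans (by gcongr; exact abs_sub _ _)
    _ ≤ w ^ p + w ^ p + p * w ^ p := by
        gcongr
        · exact hsigned _ ((abs_add_le u v).trans (by linarith))
        · exact hsigned _ (by linarith [abs_nonneg v])
    _ = (p + 2) * 3 ^ p * |v| ^ p := by rw [hw, mul_rpow (by norm_num) (abs_nonneg v)]; ring

lemma rpow_sub_two_mul_abs_pow_three_le {p u v : ℝ} (hv : |v| ≤ u) :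
    u ^ (p - 2) * |v| ^ 3 ≤ |v| ^ (p + 1) + u ^ (p - min 2 p) * |v| ^ (min 2 p + 1) := by
  rcases le_total 2 p with hp | hp
  · rw [min_eq_left hp, show (2 : ℝ) + 1 = (3 : ℕ) by norm_num, rpow_natCast]
    exact le_add_of_nonneg_left (by positivity)
  · rw [min_eq_right hp, sub_self, rpow_zero, one_mul]
    rcases (abs_nonneg v).eq_or_lt with h0 | hv0
    · rw [← h0, zero_pow three_ne_zero, mul_zero]
      positivity
    calc u ^ (p - 2) * |v| ^ 3 ≤ |v| ^ (p - 2) * |v| ^ 3 :=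
          mul_le_mul_of_nonneg_right (rpow_le_rpow_of_nonpos hv0 hv (by linarith))
            (by positivity)
      _ = |v| ^ (p + 1) := by
          rw [← rpow_natCast, ← rpow_add hv0]
          congr 1
          push_cast
          ring
      _ ≤ _ := le_add_of_nonneg_right (by positivity)

theorem taylor_estimate_f_times_v (p : ℝ) (hp : 1 < p) :
    ∃ C > 0, ∀ u : ℝ, 0 < u → ∀ v : ℝ,
      |((|u + v| ^ (p - 1) * (u + v)) - (|u| ^ (p - 1) * u)
          - (p * |u| ^ (p - 1)) * v) * v|
        ≤ C * (|v| ^ (p + 1) + u ^ (p - min 2 p) * |v| ^ (min 2 p + 1)) := by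
  set K_far := (p + 2) * 3 ^ p
  set K_near := |p * (p - 1)| * 2 ^ |p - 2|
  have hK_far : 0 < K_far := mul_pos (by linarith) (by positivity)
  refine ⟨K_far + K_near, by positivity, fun u hu v => ?_⟩
  rw [abs_mul]
  rcases le_or_gt (2 * |v|) u with hnear | hfar
  · have huv : 0 < u + v := by linarith [neg_abs_le v]
    rw [abs_of_pos huv, abs_of_pos hu, ← rpow_add_one' huv.le (by linarith),
      ← rpow_add_one' hu.le (by linarith), sub_add_cancel]
    calc _ ≤ K_near * u ^ (p - 2) * v ^ 2 * |v| :=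
          mul_le_mul_of_nonneg_right (abs_rpow_taylor_remainder_le_of_two_mul_abs_le p hu hnear)
            (abs_nonneg v)
      _ = K_near * (u ^ (p - 2) * |v| ^ 3) := by rw [← sq_abs]; ring
      _ ≤ (K_far + K_near) * (|v| ^ (p + 1) + u ^ (p - min 2 p) * |v| ^ (min 2 p + 1)) := by
          gcongr
          · exact le_add_of_nonneg_left hK_far.le
          · exact rpow_sub_two_mul_abs_pow_three_le (by linarith [abs_nonneg v])
  · have hu_le : |u| ≤ 2 * |v| := by rw [abs_of_pos hu]; exact hfar.le
    calc _ ≤ K_far * |v| ^ p * |v| :=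
          mul_le_mul_of_nonneg_right
            (abs_signed_rpow_taylor_remainder_le_of_abs_le_two_mul hp.le hu_le) (abs_nonneg v)
      _ = K_far * |v| ^ (p + 1) := by rw [rpow_add_one' (abs_nonneg v) (by linarith)]; ring
      _ ≤ (K_far + K_near) * (|v| ^ (p + 1) + u ^ (p - min 2 p) * |v| ^ (min 2 p + 1)) := by
          gcongr
          · exact le_add_of_nonneg_right (by positivity)
          · exact le_add_of_nonneg_right (by positivity)
end

section
/- Let p > 1 and p̄ = min(2,p), f(u) = |u|^{p-1}u. There is a constant C > 0 depending only on p such that for all u > 0 and v ∈ ℝ, |f(u+v) - f(u) - f'(u)v - ½f''(u)v²| ≤ C(u^{-1}|v|^{p+1} + u^{p-p̄-1}|v|^{p̄+1}). -/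
/-!
Both sides are homogeneous of degree `p` under `(u, v) ↦ (λ u, λ v)`, `λ > 0`, so it suffices to
bound the remainder at `u = 1`, as a function of `t = v / u`. For `|t| ≤ 1/2` the map
`t ↦ (1 + t) ^ p` is smooth, and three applications of the mean value inequality bound its
second-order Taylor remainder by `K |t| ^ 3 ≤ K |t| ^ (p̄ + 1)`. For `|t| ≥ 1/2` every term of the
remainder is at most a constant times `(1 + |t|) ^ (p + 1) ≤ 3 ^ (p + 1) |t| ^ (p + 1)`.
-/

open Real Set

noncomputable def taylorRemainder (p u v : ℝ) : ℝ :=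
  |u + v| ^ (p - 1) * (u + v) - |u| ^ (p - 1) * u - (p * |u| ^ (p - 1)) * v
    - (1 / 2) * (p * (p - 1) * |u| ^ (p - 3) * u) * v ^ 2

theorem taylorRemainder_one (p t : ℝ) :
    taylorRemainder p 1 t = |1 + t| ^ (p - 1) * (1 + t) - 1 - p * t - p * (p - 1) / 2 * t ^ 2 := by
  simp only [taylorRemainder, abs_one, one_rpow]
  ring

theorem taylorRemainder_mul (p : ℝ) {u : ℝ} (hu : 0 < u) (t : ℝ) :
    taylorRemainder p u (u * t) = u ^ p * taylorRemainder p 1 t := by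
  have h1 : u ^ (p - 1) * u = u ^ p := by rw [← rpow_add_one hu.ne']; ring_nf
  have h3 : u ^ (p - 3) * u ^ 3 = u ^ p := by
    rw [← rpow_natCast, ← rpow_add hu]; norm_num
  rw [taylorRemainder_one, taylorRemainder, show u + u * t = u * (1 + t) by ring, abs_mul,
    abs_of_pos hu, mul_rpow hu.le (abs_nonneg _)]
  linear_combination (|1 + t| ^ (p - 1) * (1 + t) - 1 - p * t) * h1
    - (p * (p - 1) / 2 * t ^ 2) * h3

theorem rpow_mul_abs_mul_rpow {u : ℝ} (hu : 0 < u) (a b t : ℝ) :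
    u ^ a * |u * t| ^ b = u ^ (a + b) * |t| ^ b := by
  rw [abs_mul, abs_of_pos hu, mul_rpow hu.le (abs_nonneg t), ← mul_assoc, ← rpow_add hu]

theorem abs_le_mul_pow_succ_of_hasDerivAt {s : Set ℝ} (hs : s.OrdConnected) (h0 : 0 ∈ s)
    {f f' : ℝ → ℝ} {K : ℝ} {n : ℕ} (hK : 0 ≤ K) (hf0 : f 0 = 0)
    (hf : ∀ x ∈ s, HasDerivAt f (f' x) x) (hf' : ∀ x ∈ s, |f' x| ≤ K * |x| ^ n)
    {t : ℝ} (ht : t ∈ s) : |f t| ≤ K * |t| ^ (n + 1) := by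
  have hsub : uIcc 0 t ⊆ s := hs.uIcc_subset h0 ht
  have hbound : ∀ x ∈ uIcc 0 t, ‖f' x‖ ≤ K * |t| ^ n := fun x hx => by
    have hxt : |x| ≤ |t| := by simpa using abs_sub_left_of_mem_uIcc hx
    exact (hf' x (hsub hx)).trans (by gcongr)
  have := (convex_uIcc 0 t).norm_image_sub_le_of_norm_hasDerivWithin_le
    (fun x hx => (hf x (hsub hx)).hasDerivWithinAt) hbound left_mem_uIcc right_mem_uIcc
  simpa [hf0, pow_succ, mul_assoc] using this

theorem hasDerivAt_one_add_rpow (c : ℝ) {x : ℝ} (hx : 0 < 1 + x) :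
    HasDerivAt (fun y => (1 + y) ^ c) (c * (1 + x) ^ (c - 1)) x := by
  simpa using ((hasDerivAt_id x).const_add 1).rpow_const (p := c) (Or.inl hx.ne')

theorem exists_abs_one_add_rpow_sub_one_le (c : ℝ) :
    ∃ M ≥ 0, ∀ x ∈ Icc (-1 / 2 : ℝ) (1 / 2), |(1 + x) ^ c - 1| ≤ M * |x| := by
  set I := Icc (-1 / 2 : ℝ) (1 / 2)
  have hI : ∀ x ∈ I, 0 < 1 + x := fun x hx => by linarith [hx.1]
  have hI0 : (0 : ℝ) ∈ I := ⟨by norm_num, by norm_num⟩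
  obtain ⟨M, hM⟩ := (isCompact_Icc : IsCompact I).exists_bound_of_continuousOn
    (f := fun x : ℝ => c * (1 + x) ^ (c - 1))
    (continuousOn_const.mul ((continuousOn_const.add continuousOn_id).rpow_const
      fun x hx => Or.inl (hI x hx).ne'))
  have hM0 : 0 ≤ M := (norm_nonneg _).trans (hM 0 hI0)
  refine ⟨M, hM0, fun x hx => by
    simpa using abs_le_mul_pow_succ_of_hasDerivAt (f := fun y => (1 + y) ^ c - 1)
      (f' := fun y => c * (1 + y) ^ (c - 1)) (n := 0) ordConnected_Icc hI0 hM0 (by simp)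
      (fun y hy => (hasDerivAt_one_add_rpow c (hI y hy)).sub_const 1)
      (fun y hy => by simpa using hM y hy) hx⟩

theorem exists_abs_taylorRemainder_one_le_mul_cube {p : ℝ} (hp : 1 < p) :
    ∃ K ≥ 0, ∀ t ∈ Icc (-1 / 2 : ℝ) (1 / 2), |taylorRemainder p 1 t| ≤ K * |t| ^ 3 := by
  set I := Icc (-1 / 2 : ℝ) (1 / 2)
  have hI : ∀ x ∈ I, 0 < 1 + x := fun x hx => by linarith [hx.1]
  have hI0 : (0 : ℝ) ∈ I := ⟨by norm_num, by norm_num⟩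
  obtain ⟨M, hM0, h2⟩ := exists_abs_one_add_rpow_sub_one_le (p - 2)
  have h1 : ∀ x ∈ I, |(1 + x) ^ (p - 1) - 1 - (p - 1) * x| ≤ (p - 1) * M * |x| ^ 2 := by
    refine fun x hx => abs_le_mul_pow_succ_of_hasDerivAt
      (f := fun y => (1 + y) ^ (p - 1) - 1 - (p - 1) * y)
      (f' := fun y => (p - 1) * ((1 + y) ^ (p - 2) - 1)) ordConnected_Icc hI0
      (by nlinarith) (by simp) (fun y hy => ?_) (fun y hy => ?_) hx
    · refine (((hasDerivAt_one_add_rpow (p - 1) (hI y hy)).sub_const 1).sub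
        ((hasDerivAt_id y).const_mul (p - 1))).congr_deriv ?_
      rw [show p - 1 - 1 = p - 2 by ring]; ring
    · rw [abs_mul, abs_of_pos (by linarith), mul_assoc]
      simpa using mul_le_mul_of_nonneg_left (h2 y hy) (by linarith : 0 ≤ p - 1)
  have h0 : ∀ x ∈ I, |(1 + x) ^ p - 1 - p * x - p * (p - 1) / 2 * x ^ 2|
      ≤ p * ((p - 1) * M) * |x| ^ 3 := by
    refine fun x hx => abs_le_mul_pow_succ_of_hasDerivAt
      (f := fun y => (1 + y) ^ p - 1 - p * y - p * (p - 1) / 2 * y ^ 2)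
      (f' := fun y => p * ((1 + y) ^ (p - 1) - 1 - (p - 1) * y)) ordConnected_Icc hI0
      (by positivity) (by simp) (fun y hy => ?_) (fun y hy => ?_) hx
    · refine ((((hasDerivAt_one_add_rpow p (hI y hy)).sub_const 1).sub
        ((hasDerivAt_id y).const_mul p)).sub
        ((hasDerivAt_pow 2 y).const_mul (p * (p - 1) / 2))).congr_deriv ?_
      simp only [Nat.cast_ofNat, Nat.add_one_sub_one, pow_one]; ring
    · rw [abs_mul, abs_of_pos (by linarith), mul_assoc]
      exact mul_le_mul_of_nonneg_left (h1 y hy) (by linarith)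
  refine ⟨p * ((p - 1) * M), by positivity, fun t ht => ?_⟩
  have hF : |1 + t| ^ (p - 1) * (1 + t) = (1 + t) ^ p := by
    rw [abs_of_pos (hI t ht), ← rpow_add_one (hI t ht).ne']; ring_nf
  simpa [taylorRemainder_one, hF] using h0 t ht

theorem abs_taylorRemainder_one_le {p : ℝ} (hp : 1 < p) (t : ℝ) :
    |taylorRemainder p 1 t| ≤ (2 + p + p * (p - 1) / 2) * (1 + |t|) ^ (p + 1) := by
  set s := 1 + |t|
  have hs : 1 ≤ s := le_add_of_nonneg_right (abs_nonneg t)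
  have hts : |t| ≤ s := le_add_of_nonneg_left zero_le_one
  have hpow : 1 ≤ s ^ (p + 1) := one_le_rpow hs (by linarith)
  have hlead : |(|1 + t| ^ (p - 1) * (1 + t))| ≤ s ^ (p + 1) := by
    rw [abs_mul, abs_of_nonneg (by positivity)]
    calc |1 + t| ^ (p - 1) * |1 + t| ≤ s ^ (p - 1) * s := by
          have h1t : |1 + t| ≤ s := by simpa using abs_add_le 1 t
          gcongr
      _ = s ^ (p - 1 + 1) := (rpow_add_one (by positivity) _).symm
      _ ≤ s ^ (p + 1) := rpow_le_rpow_of_exponent_le hs (by linarith)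
  have hlin : |t| ≤ s ^ (p + 1) := hts.trans (self_le_rpow_of_one_le hs (by linarith))
  have hquad : t ^ 2 ≤ s ^ (p + 1) := by
    calc t ^ 2 = |t| ^ (2 : ℝ) := by rw [rpow_two, sq_abs]
      _ ≤ s ^ (2 : ℝ) := by gcongr
      _ ≤ s ^ (p + 1) := rpow_le_rpow_of_exponent_le hs (by linarith)
  have hp0 : 0 ≤ p := by linarith
  have hq0 : 0 ≤ p * (p - 1) / 2 := by nlinarith
  have hpt := abs_le.1 (show |p * t| ≤ p * s ^ (p + 1) by
    rw [abs_mul, abs_of_nonneg hp0]; exact mul_le_mul_of_nonneg_left hlin hp0)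
  have hqt := mul_le_mul_of_nonneg_left hquad hq0
  have hqt0 := mul_nonneg hq0 (sq_nonneg t)
  rw [taylorRemainder_one, abs_le]
  constructor <;> nlinarith [abs_le.1 hlead]

theorem exists_abs_taylorRemainder_one_le {p : ℝ} (hp : 1 < p) :
    ∃ C > 0, ∀ t, |taylorRemainder p 1 t| ≤ C * (|t| ^ (p + 1) + |t| ^ (min 2 p + 1)) := by
  obtain ⟨K, hK, hsmall⟩ := exists_abs_taylorRemainder_one_le_mul_cube hp
  set L := 2 + p + p * (p - 1) / 2
  have hL : 0 ≤ L := by dsimp only [L]; nlinarith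
  refine ⟨K + L * 3 ^ (p + 1) + 1, by positivity, fun t => ?_⟩
  have htp : 0 ≤ |t| ^ (p + 1) := by positivity
  have htq : 0 ≤ |t| ^ (min 2 p + 1) := by positivity
  have hL3 : 0 ≤ L * 3 ^ (p + 1) := by positivity
  rcases le_or_gt |t| (1 / 2) with ht | ht
  · have hcube : |t| ^ 3 ≤ |t| ^ (min 2 p + 1) := by
      rw [← rpow_natCast]
      exact rpow_le_rpow_of_exponent_ge' (abs_nonneg t) (by linarith) (by positivity)
        (by push_cast; linarith [min_le_left 2 p])
    have ht' : t ∈ Icc (-1 / 2 : ℝ) (1 / 2) := by rw [mem_Icc, neg_div]; exact abs_le.1 ht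
    calc |taylorRemainder p 1 t| ≤ K * |t| ^ 3 := hsmall t ht'
      _ ≤ K * |t| ^ (min 2 p + 1) := by gcongr
      _ ≤ _ := by nlinarith
  · calc |taylorRemainder p 1 t| ≤ L * (1 + |t|) ^ (p + 1) := abs_taylorRemainder_one_le hp t
      _ ≤ L * (3 * |t|) ^ (p + 1) := by gcongr; linarith
      _ = L * 3 ^ (p + 1) * |t| ^ (p + 1) := by rw [mul_rpow (by norm_num) (abs_nonneg t)]; ring
      _ ≤ _ := by nlinarith

theorem taylor_estimate_f_second_order (p : ℝ) (hp : 1 < p) :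
    ∃ C > 0, ∀ u : ℝ, 0 < u → ∀ v : ℝ,
      |(|u + v| ^ (p - 1) * (u + v)) - (|u| ^ (p - 1) * u)
          - (p * |u| ^ (p - 1)) * v - (1 / 2) * (p * (p - 1) * |u| ^ (p - 3) * u) * v ^ 2|
        ≤ C * (u ^ (-1 : ℝ) * |v| ^ (p + 1) + u ^ (p - min 2 p - 1) * |v| ^ (min 2 p + 1)) := by
  obtain ⟨C, hC, hbound⟩ := exists_abs_taylorRemainder_one_le hp
  refine ⟨C, hC, fun u hu v => ?_⟩
  obtain ⟨t, rfl⟩ : ∃ t, v = u * t := ⟨v / u, by field_simp⟩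
  have hRHS : u ^ (-1 : ℝ) * |u * t| ^ (p + 1) + u ^ (p - min 2 p - 1) * |u * t| ^ (min 2 p + 1)
      = u ^ p * (|t| ^ (p + 1) + |t| ^ (min 2 p + 1)) := by
    rw [rpow_mul_abs_mul_rpow hu, rpow_mul_abs_mul_rpow hu, show (-1 : ℝ) + (p + 1) = p by ring,
      show p - min 2 p - 1 + (min 2 p + 1) = p by ring, mul_add]
  change |taylorRemainder p u (u * t)| ≤ _
  rw [taylorRemainder_mul p hu, abs_mul, abs_of_pos (rpow_pos_of_pos hu p), hRHS, mul_left_comm]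
  exact mul_le_mul_of_nonneg_left (hbound t) (rpow_nonneg hu.le p)
end

section
/- Let p > 1, κ = (2(p+1)/(p-1)²)^{1/(p-1)}, k ≥ 1, and A : ℝᴺ → [0,∞) a function such that A(x) ≤ C₀|x - x₀|^k for |x - x₀| < r, where A(x₀) = 0. Define U₀(t,x) = κ(t + A(x))^{-2/(p-1)}. Then there exist constants c, C > 0 (depending on r) such that for all t ∈ (0,1], c t^{-2/(p-1) + N/(2k)} ≤ ‖U₀(t,·)‖_{L²(|x-x₀|<r)} ≤ C t^{-2/(p-1)}. -/
/-!
Since `A ≥ 0` and the exponent `-2/(p-1)` is negative, `U₀(t,·) ≤ κ t^(-2/(p-1))` everywhere,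
which gives the upper bound. Conversely `A ≤ C₀ |x - x₀|^k` forces `A ≤ t` on a ball of radius
`≍ t^(1/k)` around `x₀`; there `U₀(t,·) ≥ κ (2t)^(-2/(p-1))`, and the ball has volume `≍ t^(N/k)`,
which gives the lower bound.
-/

open Real MeasureTheory Metric Set

section SquareIntegralBounds

variable {X : Type*} [MeasurableSpace X] {μ : Measure X} {s u : Set X} {f : X → ℝ} {M : ℝ}

theorem sqrt_setIntegral_sq_le (hs : μ s < ⊤) (hM : 0 ≤ M) (hf : ∀ x ∈ s, |f x| ≤ M) :
    √(∫ x in s, f x ^ 2 ∂μ) ≤ M * √(μ.real s) := by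
  have h : ∫ x in s, f x ^ 2 ∂μ ≤ M ^ 2 * μ.real s := by
    refine (le_norm_self _).trans (norm_setIntegral_le_of_norm_le_const hs fun x hx => ?_)
    rw [norm_pow, norm_eq_abs]
    exact pow_le_pow_left₀ (abs_nonneg _) (hf x hx) 2
  calc √(∫ x in s, f x ^ 2 ∂μ) ≤ √(M ^ 2 * μ.real s) := sqrt_le_sqrt h
    _ = M * √(μ.real s) := by rw [sqrt_mul (sq_nonneg M), sqrt_sq hM]

theorem mul_sqrt_le_sqrt_setIntegral_sq (hu : MeasurableSet u) (hus : u ⊆ s) (hμu : μ u ≠ ⊤)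
    (hf : IntegrableOn (fun x => f x ^ 2) s μ) (hM : 0 ≤ M) (hMf : ∀ x ∈ u, M ≤ f x) :
    M * √(μ.real u) ≤ √(∫ x in s, f x ^ 2 ∂μ) := by
  have h : M ^ 2 * μ.real u ≤ ∫ x in s, f x ^ 2 ∂μ :=
    calc M ^ 2 * μ.real u ≤ ∫ x in u, f x ^ 2 ∂μ :=
          setIntegral_ge_of_const_le_real hu hμu
            (fun x hx => pow_le_pow_left₀ hM (hMf x hx) 2) (hf.mono_set hus)
      _ ≤ ∫ x in s, f x ^ 2 ∂μ :=
          setIntegral_mono_set hf (Filter.Eventually.of_forall fun x => sq_nonneg _)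
            hus.eventuallyLE
  calc M * √(μ.real u) = √(M ^ 2 * μ.real u) := by rw [sqrt_mul (sq_nonneg M), sqrt_sq hM]
    _ ≤ √(∫ x in s, f x ^ 2 ∂μ) := sqrt_le_sqrt h

end SquareIntegralBounds

theorem MeasureTheory.Measure.addHaar_real_ball_of_pos {E : Type*} [NormedAddCommGroup E]
    [NormedSpace ℝ E] [MeasurableSpace E] [BorelSpace E] [FiniteDimensional ℝ E] (μ : Measure E)
    [μ.IsAddHaarMeasure] (x : E) {ρ : ℝ} (hρ : 0 < ρ) :
    μ.real (ball x ρ) = ρ ^ Module.finrank ℝ E * μ.real (ball 0 1) := by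
  rw [measureReal_def, Measure.addHaar_ball_of_pos μ x hρ, ENNReal.toReal_mul,
    ENNReal.toReal_ofReal (by positivity), measureReal_def]

theorem sqrt_addHaar_real_ball_mul_rpow {E : Type*} [NormedAddCommGroup E] [NormedSpace ℝ E]
    [MeasurableSpace E] [BorelSpace E] [FiniteDimensional ℝ E] (μ : Measure E)
    [μ.IsAddHaarMeasure] (x : E) {m t : ℝ} (hm : 0 < m) (ht : 0 < t) (k : ℝ) :
    √(μ.real (ball x (m * t ^ k⁻¹))) =
      √(m ^ Module.finrank ℝ E * μ.real (ball 0 1)) * t ^ (Module.finrank ℝ E / (2 * k)) := by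
  rw [Measure.addHaar_real_ball_of_pos μ x (by positivity), mul_pow, ← rpow_natCast (t ^ k⁻¹),
    ← rpow_mul ht.le, mul_right_comm, sqrt_mul (by positivity) (t ^ _), sqrt_eq_rpow (t ^ _),
    ← rpow_mul ht.le]
  congr 2
  ring

theorem exists_ball_rpow_subset_sublevel {X : Type*} [PseudoMetricSpace X] {A : X → ℝ} {x₀ : X}
    {r C₀ k : ℝ} (hr : 0 < r) (hC₀ : 0 < C₀) (hk : 0 < k)
    (hA : ∀ x, dist x x₀ < r → A x ≤ C₀ * dist x x₀ ^ k) :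
    ∃ m > 0, m ≤ r ∧ ∀ t ∈ Ioc (0 : ℝ) 1, ball x₀ (m * t ^ k⁻¹) ⊆ {x | A x ≤ t} := by
  set m := min r (C₀ ^ (-k⁻¹))
  have hm : 0 < m := lt_min hr (rpow_pos_of_pos hC₀ _)
  refine ⟨m, hm, min_le_left _ _, ?_⟩
  rintro t ⟨ht0, ht1⟩ x (hx : dist x x₀ < m * t ^ k⁻¹)
  have hρm : m * t ^ k⁻¹ ≤ m :=
    mul_le_of_le_one_right hm.le (rpow_le_one ht0.le ht1 (inv_nonneg.2 hk.le))
  calc A x ≤ C₀ * dist x x₀ ^ k := hA x (hx.trans_le (hρm.trans (min_le_left _ _)))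
    _ ≤ C₀ * (C₀ ^ (-k⁻¹) * t ^ k⁻¹) ^ k := by
      gcongr
      exact hx.le.trans (mul_le_mul_of_nonneg_right (min_le_right _ _) (by positivity))
    _ = t := by
      rw [mul_rpow (by positivity) (by positivity), ← rpow_mul hC₀.le, ← rpow_mul ht0.le,
        neg_mul, inv_mul_cancel₀ hk.ne', rpow_neg_one, rpow_one, ← mul_assoc,
        mul_inv_cancel₀ hC₀.ne', one_mul]

section Profile

variable {X : Type*} [MetricSpace X] [ProperSpace X] [MeasurableSpace X]
  {μ : Measure X} [IsFiniteMeasureOnCompacts μ] {A : X → ℝ} {x₀ : X} {r κ e t : ℝ}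

theorem sqrt_setIntegral_ball_rpow_sq_le (hA : ∀ x, 0 ≤ A x) (ht : 0 < t) (hκ : 0 ≤ κ)
    (he : e ≤ 0) :
    √(∫ x in ball x₀ r, (κ * (t + A x) ^ e) ^ 2 ∂μ) ≤ κ * t ^ e * √(μ.real (ball x₀ r)) := by
  refine sqrt_setIntegral_sq_le measure_ball_lt_top (by positivity) fun x _ => ?_
  have hx : 0 < t + A x := by linarith [hA x]
  rw [abs_of_nonneg (by positivity)]
  exact mul_le_mul_of_nonneg_left (rpow_le_rpow_of_nonpos ht (le_add_of_nonneg_right (hA x)) he) hκ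

theorem le_sqrt_setIntegral_ball_rpow_sq [OpensMeasurableSpace X] {ρ : ℝ}
    (hAc : Continuous A) (hA : ∀ x, 0 ≤ A x) (ht : 0 < t) (hκ : 0 ≤ κ) (he : e ≤ 0)
    (hρr : ρ ≤ r) (hAt : ∀ x ∈ ball x₀ ρ, A x ≤ t) :
    κ * (2 * t) ^ e * √(μ.real (ball x₀ ρ)) ≤
      √(∫ x in ball x₀ r, (κ * (t + A x) ^ e) ^ 2 ∂μ) := by
  have hpos : ∀ x, 0 < t + A x := fun x => by linarith [hA x]
  have hcont : Continuous fun x => (κ * (t + A x) ^ e) ^ 2 :=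
    (continuous_const.mul
      ((continuous_const.add hAc).rpow_const fun x => Or.inl (hpos x).ne')).pow 2
  refine mul_sqrt_le_sqrt_setIntegral_sq measurableSet_ball (ball_subset_ball hρr)
    measure_ball_lt_top.ne ?_ (by positivity) fun x hx => ?_
  · exact (hcont.continuousOn.integrableOn_compact (isCompact_closedBall x₀ r)).mono_set
      ball_subset_closedBall
  · exact mul_le_mul_of_nonneg_left
      (rpow_le_rpow_of_nonpos (hpos x) (by linarith [hAt x hx]) he) hκ

end Profile

theorem U0_L2_two_sided_general (N : ℕ) (p : ℝ) (hp : 1 < p)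
    (k : ℝ) (hk : 1 ≤ k)
    (κ : ℝ) (hκ : κ = (2 * (p + 1) / (p - 1) ^ 2) ^ (1 / (p - 1)))
    (x₀ : EuclideanSpace ℝ (Fin N)) (r : ℝ) (hr : 0 < r)
    (A : EuclideanSpace ℝ (Fin N) → ℝ) (hAcont : Continuous A) (hA0 : ∀ x, 0 ≤ A x)
    (C₀ : ℝ) (hC₀ : 0 < C₀) (hAup : ∀ x, dist x x₀ < r → A x ≤ C₀ * dist x x₀ ^ k)
    (U₀ : ℝ → EuclideanSpace ℝ (Fin N) → ℝ)
    (hU₀ : ∀ t x, U₀ t x = κ * (t + A x) ^ (-2 / (p - 1))) :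
    ∃ c > 0, ∃ C > 0, ∀ t ∈ Set.Ioc (0:ℝ) 1,
      c * t ^ (-2 / (p - 1) + (N : ℝ) / (2 * k))
        ≤ (∫ x in Metric.ball x₀ r, (U₀ t x) ^ 2) ^ ((1:ℝ)/2) ∧
      (∫ x in Metric.ball x₀ r, (U₀ t x) ^ 2) ^ ((1:ℝ)/2)
        ≤ C * t ^ (-2 / (p - 1)) := by
  set e : ℝ := -2 / (p - 1)
  have he : e ≤ 0 := div_nonpos_of_nonpos_of_nonneg (by norm_num) (by linarith)
  have hκ0 : 0 < κ := hκ ▸ rpow_pos_of_pos (div_pos (by linarith) (by nlinarith)) _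
  obtain ⟨m, hm, hmr, hsub⟩ := exists_ball_rpow_subset_sublevel hr hC₀ (by linarith) hAup
  set B := volume.real (ball (0 : EuclideanSpace ℝ (Fin N)) 1)
  have hB : 0 < B :=
    ENNReal.toReal_pos (measure_ball_pos volume 0 one_pos).ne' measure_ball_lt_top.ne
  have hV : 0 < volume.real (ball x₀ r) :=
    ENNReal.toReal_pos (measure_ball_pos volume x₀ hr).ne' measure_ball_lt_top.ne
  refine ⟨κ * 2 ^ e * √(m ^ N * B), by positivity, κ * √(volume.real (ball x₀ r)),
    by positivity, ?_⟩
  rintro t ⟨ht0, ht1⟩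
  simp_rw [hU₀, ← sqrt_eq_rpow]
  refine ⟨?_, (sqrt_setIntegral_ball_rpow_sq_le hA0 ht0 hκ0.le he).trans_eq (by ring)⟩
  have hρr : m * t ^ k⁻¹ ≤ r :=
    (mul_le_of_le_one_right hm.le (rpow_le_one ht0.le ht1 (by positivity))).trans hmr
  calc κ * 2 ^ e * √(m ^ N * B) * t ^ (e + N / (2 * k))
      = κ * (2 * t) ^ e * √(volume.real (ball x₀ (m * t ^ k⁻¹))) := by
        rw [sqrt_addHaar_real_ball_mul_rpow _ _ hm ht0, finrank_euclideanSpace_fin,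
          mul_rpow (by norm_num) ht0.le, rpow_add ht0]
        ring
    _ ≤ _ := le_sqrt_setIntegral_ball_rpow_sq hAcont hA0 ht0 hκ0.le he hρr (hsub t ⟨ht0, ht1⟩)

theorem U0_L2_two_sided (N : ℕ) (hN : 1 ≤ N) (p : ℝ) (hp : 1 < p)
    (k : ℝ) (hk : 1 ≤ k) (hpk : (N : ℝ) / k < 4 / (p - 1))
    (κ : ℝ) (hκ : κ = (2 * (p + 1) / (p - 1) ^ 2) ^ (1 / (p - 1)))
    (x₀ : EuclideanSpace ℝ (Fin N)) (r : ℝ) (hr : 0 < r)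
    (A : EuclideanSpace ℝ (Fin N) → ℝ) (hAcont : Continuous A) (hA0 : ∀ x, 0 ≤ A x)
    (hAx₀ : A x₀ = 0)
    (C₀ : ℝ) (hC₀ : 0 < C₀) (hAup : ∀ x, dist x x₀ < r → A x ≤ C₀ * dist x x₀ ^ k)
    (U₀ : ℝ → EuclideanSpace ℝ (Fin N) → ℝ)
    (hU₀ : ∀ t x, U₀ t x = κ * (t + A x) ^ (-2 / (p - 1))) :
    ∃ c > 0, ∃ C > 0, ∀ t ∈ Set.Ioc (0:ℝ) 1,
      c * t ^ (-2 / (p - 1) + (N : ℝ) / (2 * k))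
        ≤ (∫ x in Metric.ball x₀ r, (U₀ t x) ^ 2) ^ ((1:ℝ)/2) ∧
      (∫ x in Metric.ball x₀ r, (U₀ t x) ^ 2) ^ ((1:ℝ)/2)
        ≤ C * t ^ (-2 / (p - 1)) :=
  U0_L2_two_sided_general N p hp k hk κ hκ x₀ r hr A hAcont hA0 C₀ hC₀ hAup U₀ hU₀
end
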